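/- Let S be a (−1,−1)-balanced Freudenthal Kantor triple system over a field F of characteristic ≠ 2 and let e ∈ S with ⟨e|e⟩ ≠ 0. Define a binary product on S by x·y := ⟨e|e⟩⁻¹ exy. Then e is a two-sided unit of (S,·), and x·x = (2⟨e|x⟩/⟨e|e⟩)x − (⟨x|x⟩/⟨e|e⟩)e for every x ∈ S; in particular, (S,·) is a quadratic algebra with norm N(x) = ⟨x|x⟩/⟨e|e⟩. -/
import Mathlib


/-- The binary product `x·y := ⟨e|e⟩⁻¹ exy` on a `(−1,−1)`-balanced Freudenthal
Kantor triple system. -/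
noncomputable def bmul {F S : Type*} [Field F] [AddCommGroup S] [Module F S]
    (T : S →ₗ[F] S →ₗ[F] S →ₗ[F] S) (B : S →ₗ[F] S →ₗ[F] F) (e x y : S) : S :=
  (B e e)⁻¹ • T e x y

/-- Let `S` be a `(−1,−1)`-balanced Freudenthal Kantor triple system over a field
of characteristic `≠ 2` and `e ∈ S` with `⟨e|e⟩ ≠ 0`.  With `x·y := ⟨e|e⟩⁻¹ exy`,
`e` is a two-sided unit of `(S,·)` and
`x·x = (2⟨e|x⟩/⟨e|e⟩)x − (⟨x|x⟩/⟨e|e⟩)e` for every `x`; that is, `(S,·)` is a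
quadratic algebra with norm `N(x) = ⟨x|x⟩/⟨e|e⟩`. -/
theorem stmt12 {F S : Type*} [Field F] [AddCommGroup S] [Module F S]
    (hchar : (2 : F) ≠ 0)
    (T : S →ₗ[F] S →ₗ[F] S →ₗ[F] S) (B : S →ₗ[F] S →ₗ[F] F)
    (hBsym : ∀ x y : S, B x y = B y x) (hBne : B ≠ 0)
    (gjts : ∀ u v x y z : S,
      T u v (T x y z) = T (T u v x) y z - T x (T v u y) z + T x y (T u v z))
    (hxxy : ∀ x y : S, T x x y = B x x • y)
    (hxyx : ∀ x y : S, T x y x = B x x • y)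
    (e : S) (he : B e e ≠ 0) :
    (∀ x : S, bmul T B e e x = x ∧ bmul T B e x e = x) ∧
    (∀ x : S, bmul T B e x x =
      (2 * B e x / B e e) • x - (B x x / B e e) • e) := by
  constructor
  · intro x
    constructor
    · simp [bmul, hxxy, smul_smul, inv_mul_cancel₀ he]
    · simp [bmul, hxyx, smul_smul, inv_mul_cancel₀ he]
  · intro x
    have key : T e x x + T x x e = (2 * B e x) • x := by
      have h := hxyx (e + x) x
      simp only [map_add, LinearMap.add_apply] at h
      rw [hxyx e x, hxyx x x] at h
      have h2 : T e x x + T x x e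
          = (B e e + B x e + (B e x + B x x)) • x - B e e • x - B x x • x := by
        rw [← h]; abel
      rw [h2, hBsym x e]; module
    have hx : T e x x = (2 * B e x) • x - B x x • e := by
      rw [← key, hxxy x e]; abel
    rw [bmul, hx, div_eq_inv_mul, div_eq_inv_mul]
    module
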